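/- arXiv:math/0603324 — 2 statements merged into one kernel-verified Lean document; each statement's English description precedes it below -/
import Mathlib

section
/- Let m ≥ 3 and let u_1, …, u_m be distinct complex numbers. Then the sum over all m-cycles γ in the symmetric group S_m of the product ∏_{i=1}^m 1/(u_{γ(i)} − u_i) equals 0. -/
open Finset Polynomial

lemma lagrange_eval (s : Finset ℂ) (p : Polynomial ℂ) (hp : p.degree < s.card) (a : ℂ) :
    p.eval a = ∑ c ∈ s, p.eval c * ∏ d ∈ s.erase c, ((a - d) * (c - d)⁻¹) := by
  have hinj : Set.InjOn (id : ℂ → ℂ) s := Function.injective_id.injOn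
  have h := Lagrange.eq_interpolate (v := id) (s := s) hinj hp
  conv_lhs => rw [h]
  rw [Lagrange.interpolate_apply, eval_finset_sum]
  refine Finset.sum_congr rfl fun c hc => ?_
  rw [eval_mul, eval_C, Lagrange.basis, eval_prod]
  congr 1
  refine Finset.prod_congr rfl fun d hd => ?_
  simp [Lagrange.basisDivisor, mul_comm]

lemma lagrange_eval' (s : Finset ℂ) (p : Polynomial ℂ) (hp : p.degree < s.card) (a : ℂ) :
    p.eval a = ∑ c ∈ s, p.eval c * ∏ d ∈ s.erase c, ((d - a) * (d - c)⁻¹) := by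
  rw [lagrange_eval s p hp a]
  refine Finset.sum_congr rfl fun c _ => ?_
  congr 1
  refine Finset.prod_congr rfl fun d _ => ?_
  rw [show (d - a) = -(a - d) by ring, show (d - c) = -(c - d) by ring, inv_neg, neg_mul_neg]

-- specialized form used twice
lemma lagrange_pow (s : Finset ℂ) (k : ℕ) (hk : (k:ℕ) + 1 ≤ s.card) (β a : ℂ) :
    (β - a) ^ k = ∑ c ∈ s, (β - c) ^ k * ∏ d ∈ s.erase c, ((d - a) * (d - c)⁻¹) := by
  have hdeg : ((C β - X : Polynomial ℂ) ^ k).degree < s.card := by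
    have h1 : (C β - X : Polynomial ℂ) = -(X - C β) := by ring
    calc ((C β - X : Polynomial ℂ) ^ k).degree = k • (C β - X : Polynomial ℂ).degree := by
          rw [degree_pow]
      _ = (k : WithBot ℕ) := by rw [h1, degree_neg, degree_X_sub_C]; simp
      _ < (s.card : WithBot ℕ) := by exact_mod_cast (by omega : k < s.card)
  have h := lagrange_eval' s ((C β - X) ^ k) hdeg a
  simpa using h

section CycleStuff
open Finset Equiv Equiv.Perm
variable {m : ℕ}

lemma insert_cycle {δ : Equiv.Perm (Fin m)} (hδ : δ.IsCycle) {a c : Fin m}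
    (ha : a ∉ δ.support) (hc : c ∈ δ.support) :
    (Equiv.swap a c * δ).IsCycle ∧ (Equiv.swap a c * δ).support = insert a δ.support := by
  set γ := Equiv.swap a c * δ with hγdef
  have ha' : δ a = a := notMem_support.mp ha
  have hc' : δ c ≠ c := mem_support.mp hc
  have hac : a ≠ c := fun h => ha (h ▸ hc)
  have hδa : ∀ x, δ x = a → x = a := fun x hx => δ.injective (hx.trans ha'.symm)
  have hγa : γ a = c := by
    simp [hγdef, Equiv.Perm.mul_apply, ha']
  have hn : 0 < orderOf δ := orderOf_pos δ
  -- powers agree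
  have hpow : ∀ k, k < orderOf δ → (γ ^ k) c = (δ ^ k) c := by
    intro k
    induction k with
    | zero => intro _; simp
    | succ k ih =>
      intro hk1
      have hk : k < orderOf δ := Nat.lt_of_succ_lt hk1
      have hv : (δ ^ (k+1)) c ∈ δ.support := pow_apply_mem_support.mpr hc
      have hva : (δ ^ (k+1)) c ≠ a := fun h => ha (h ▸ hv)
      have hvc : (δ ^ (k+1)) c ≠ c := by
        intro h
        have h1 : δ ^ (k+1) = 1 := (hδ.pow_eq_one_iff' hc').mpr h
        have h2 : orderOf δ ∣ (k+1) := orderOf_dvd_iff_pow_eq_one.mpr h1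
        exact absurd (Nat.le_of_dvd (Nat.succ_pos k) h2) (not_le.mpr hk1)
      rw [pow_succ', Equiv.Perm.mul_apply, ih hk]
      rw [hγdef, Equiv.Perm.mul_apply]
      have : δ ((δ ^ k) c) = (δ ^ (k+1)) c := by
        rw [pow_succ', Equiv.Perm.mul_apply]
      rw [this]
      exact Equiv.swap_apply_of_ne_of_ne hva hvc
  have hcyc : γ.IsCycle := by
    refine ⟨a, by rw [hγa]; exact hac.symm, fun y hy => ?_⟩
    rcases eq_or_ne y a with rfl | hya
    · exact Equiv.Perm.SameCycle.refl _ _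
    · have hyδ : δ y ≠ y := by
        intro h
        have hyc : y ≠ c := fun hh => hc' (hh ▸ h)
        rw [hγdef, Equiv.Perm.mul_apply, h, Equiv.swap_apply_of_ne_of_ne hya hyc] at hy
        exact hy rfl
      obtain ⟨i, hi⟩ := hδ.exists_pow_eq hc' hyδ
      have hik : (δ ^ (i % orderOf δ)) c = y := by rw [pow_mod_orderOf]; exact hi
      have hlt : i % orderOf δ < orderOf δ := Nat.mod_lt _ hn
      have h1 : γ.SameCycle a c := ⟨1, by simpa using hγa⟩
      have h2 : γ.SameCycle c y :=
        ⟨(i % orderOf δ : ℕ), by rw [zpow_natCast, hpow _ hlt]; exact hik⟩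
      exact h1.trans h2
  refine ⟨hcyc, ?_⟩
  ext x
  simp only [mem_support, mem_insert]
  rcases eq_or_ne x a with rfl | hxa
  · simp [hγa, hac.symm]
  · rcases eq_or_ne (δ x) x with hfix | hmov
    · have hxc : x ≠ c := fun hh => hc' (hh ▸ hfix)
      rw [hγdef, Equiv.Perm.mul_apply, hfix, Equiv.swap_apply_of_ne_of_ne hxa hxc]
      simp [hfix, hxa]
    · have hda : δ x ≠ a := fun h => hxa (hδa x h)
      rcases eq_or_ne (δ x) c with hdc | hdc
      · rw [hγdef, Equiv.Perm.mul_apply, hdc, Equiv.swap_apply_right]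
        constructor
        · intro _
          exact Or.inr fun h => hmov (hdc.trans h)
        · intro _; exact Ne.symm hxa
      · rw [hγdef, Equiv.Perm.mul_apply, Equiv.swap_apply_of_ne_of_ne hda hdc]
        simp [hmov, hxa]

lemma erase_cycle {γ : Equiv.Perm (Fin m)} (hγ : γ.IsCycle) {a : Fin m}
    (ha : a ∈ γ.support) (hcard : 3 ≤ γ.support.card) :
    (Equiv.swap a (γ a) * γ).IsCycle ∧
      (Equiv.swap a (γ a) * γ).support = γ.support.erase a := by
  have hx : γ a ≠ a := mem_support.mp ha
  have hffx : γ (γ a) ≠ a := by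
    intro h
    have h2 : (γ ^ 2) a = a := by
      rw [pow_succ, pow_one, Equiv.Perm.mul_apply]; exact h
    have h1 : γ ^ 2 = 1 := (hγ.pow_eq_one_iff' hx).mpr h2
    have hd : orderOf γ ∣ 2 := orderOf_dvd_iff_pow_eq_one.mpr h1
    have := Nat.le_of_dvd (by norm_num) hd
    rw [hγ.orderOf] at this
    omega
  exact ⟨hγ.swap_mul hx hffx, by
    rw [support_swap_mul_eq γ a hffx, sdiff_singleton_eq_erase]⟩


open scoped Classical

noncomputable def cycSum (u y : Fin m → ℂ) (t : Finset (Fin m)) : ℂ :=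
  ∑ γ ∈ Finset.univ.filter
      (fun γ : Equiv.Perm (Fin m) => γ.IsCycle ∧ γ.support = t),
    ∏ i ∈ t, (y (γ i) - u i)⁻¹

lemma cycSum_rec (u y : Fin m → ℂ) (t : Finset (Fin m)) (a : Fin m)
    (ha : a ∈ t) (hcard : 3 ≤ t.card) :
    cycSum u y t = ∑ c ∈ t.erase a,
      (y c - u a)⁻¹ * cycSum u (Function.update y c (y a)) (t.erase a) := by
  rw [cycSum]
  have hmaps : ∀ γ ∈ Finset.univ.filter
      (fun γ : Equiv.Perm (Fin m) => γ.IsCycle ∧ γ.support = t), γ a ∈ t.erase a := by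
    intro γ hγ
    rw [Finset.mem_filter] at hγ
    obtain ⟨-, hcyc, hsupp⟩ := hγ
    have ha' : a ∈ γ.support := hsupp ▸ ha
    refine Finset.mem_erase.mpr ⟨?_, ?_⟩
    · intro h
      exact (Equiv.Perm.mem_support.mp ha') h
    · have := Equiv.Perm.apply_mem_support.mpr ha'
      rwa [hsupp] at this
  rw [← Finset.sum_fiberwise_of_maps_to hmaps]
  refine Finset.sum_congr rfl fun c hc => ?_
  obtain ⟨hca, hct⟩ := Finset.mem_erase.mp hc
  rw [cycSum, Finset.mul_sum]
  refine Finset.sum_bij' (i := fun γ _ => Equiv.swap a c * γ)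
    (j := fun δ _ => Equiv.swap a c * δ) ?_ ?_ ?_ ?_ ?_
  · -- hi
    intro γ hγ
    simp only [Finset.mem_filter, Finset.mem_univ, true_and] at hγ ⊢
    obtain ⟨⟨hcyc, hsupp⟩, hγa⟩ := hγ
    have := erase_cycle hcyc (a := a) (by rw [hsupp]; exact ha) (by rw [hsupp]; exact hcard)
    rw [hγa] at this
    exact ⟨this.1, by rw [this.2, hsupp]⟩
  · -- hj
    intro δ hδ
    simp only [Finset.mem_filter, Finset.mem_univ, true_and] at hδ ⊢
    obtain ⟨hcyc, hsupp⟩ := hδ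
    have hanot : a ∉ δ.support := by rw [hsupp]; exact Finset.notMem_erase a t
    have hcin : c ∈ δ.support := by rw [hsupp]; exact hc
    have := insert_cycle hcyc hanot hcin
    refine ⟨⟨this.1, by rw [this.2, hsupp, Finset.insert_erase ha]⟩, ?_⟩
    have hδa : δ a = a := Equiv.Perm.notMem_support.mp hanot
    rw [Equiv.Perm.mul_apply, hδa, Equiv.swap_apply_left]
  · intro γ _; show Equiv.swap a c * (Equiv.swap a c * γ) = γ
    rw [Equiv.swap_mul_self_mul]
  · intro δ _; show Equiv.swap a c * (Equiv.swap a c * δ) = δ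
    rw [Equiv.swap_mul_self_mul]
  · -- values
    intro γ hγ
    simp only [Finset.mem_filter, Finset.mem_univ, true_and] at hγ
    obtain ⟨⟨hcyc, hsupp⟩, hγa⟩ := hγ
    rw [← Finset.mul_prod_erase t _ ha, hγa]
    congr 1
    refine Finset.prod_congr rfl fun i hi => ?_
    obtain ⟨hia, hit⟩ := Finset.mem_erase.mp hi
    rcases eq_or_ne (γ i) a with hgia | hgia
    · rw [Equiv.Perm.mul_apply, hgia, Equiv.swap_apply_left,
        Function.update_self]
    · have hgic : γ i ≠ c := by
        intro h
        exact hia (γ.injective (h.trans hγa.symm))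
      rw [Equiv.Perm.mul_apply, Equiv.swap_apply_of_ne_of_ne hgia hgic,
        Function.update_of_ne hgic]



-- base case
lemma cycSum_base (u : Fin m → ℂ) (β : ℂ) (t : Finset (Fin m)) (a : Fin m)
    (y : Fin m → ℂ) (hcard : t.card = 2) (ha : a ∈ t)
    (hy : ∀ i ∈ t.erase a, y i = u i) (hya : y a = β) :
    cycSum u y t = ∏ c ∈ t.erase a, ((u c - u a) * (β - u c))⁻¹ := by
  have hec : (t.erase a).card = 1 := by
    rw [Finset.card_erase_of_mem ha, hcard]
  obtain ⟨z, hz⟩ := Finset.card_eq_one.mp hec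
  have hzmem : z ∈ t.erase a := hz ▸ Finset.mem_singleton_self z
  obtain ⟨hza, hzt⟩ := Finset.mem_erase.mp hzmem
  have haz : a ≠ z := Ne.symm hza
  have ht : t = {a, z} := by
    rw [← Finset.insert_erase ha, hz]
  have hfilter : (Finset.univ.filter
      (fun γ : Equiv.Perm (Fin m) => γ.IsCycle ∧ γ.support = t)) = {Equiv.swap a z} := by
    ext γ
    simp only [Finset.mem_filter, Finset.mem_univ, true_and, Finset.mem_singleton]
    constructor
    · rintro ⟨hcyc, hsupp⟩
      have h2 : γ.support.card = 2 := by rw [hsupp, hcard]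
      obtain ⟨x, w, hxw, rfl⟩ := Equiv.Perm.card_support_eq_two.mp h2
      rw [Equiv.Perm.support_swap hxw, ht] at hsupp
      have hx : x = a ∨ x = z := by
        have : x ∈ ({a, z} : Finset (Fin m)) := by rw [← hsupp]; simp
        simpa using this
      have hw : w = a ∨ w = z := by
        have : w ∈ ({a, z} : Finset (Fin m)) := by rw [← hsupp]; simp
        simpa using this
      rcases hx with rfl | rfl
      · rcases hw with rfl | rfl
        · exact absurd rfl hxw
        · rfl
      · rcases hw with rfl | rfl
        · exact Equiv.swap_comm _ _
        · exact absurd rfl hxw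
    · rintro rfl
      refine ⟨Equiv.Perm.isCycle_swap haz, ?_⟩
      rw [Equiv.Perm.support_swap haz, ht]
  rw [cycSum, hfilter, Finset.sum_singleton, hz, Finset.prod_singleton, ht]
  rw [Finset.prod_pair haz, Equiv.swap_apply_left, Equiv.swap_apply_right]
  rw [hy z hzmem, hya, mul_inv]

lemma cycSum_closed (u : Fin m → ℂ) (hu : Function.Injective u) (β : ℂ) :
    ∀ (n : ℕ) (t : Finset (Fin m)) (a : Fin m) (y : Fin m → ℂ),
      t.card = n + 2 → a ∈ t → (∀ i ∈ t, β ≠ u i) →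
      (∀ i ∈ t.erase a, y i = u i) → y a = β →
      cycSum u y t = (β - u a) ^ n * ∏ c ∈ t.erase a, ((u c - u a) * (β - u c))⁻¹ := by
  intro n
  induction n with
  | zero =>
    intro t a y hcard ha hβ hy hya
    rw [pow_zero, one_mul]
    exact cycSum_base u β t a y hcard ha hy hya
  | succ n IH =>
    intro t a y hcard ha hβ hy hya
    set s := t.erase a with hsdef
    have hscard : s.card = n + 2 := by
      rw [hsdef, Finset.card_erase_of_mem ha, hcard]
      omega
    have hrec := cycSum_rec u y t a ha (by omega)
    rw [hrec]
    -- rewrite each summand with IH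
    have hstep : ∀ c ∈ s, (y c - u a)⁻¹ * cycSum u (Function.update y c (y a)) s
        = (u c - u a)⁻¹ * ((β - u c) ^ n * ∏ d ∈ s.erase c, ((u d - u c) * (β - u d))⁻¹) := by
      intro c hc
      obtain ⟨hca, hct⟩ := Finset.mem_erase.mp hc
      have hyc : y c = u c := hy c hc
      have h1 : cycSum u (Function.update y c (y a)) s
          = (β - u c) ^ n * ∏ d ∈ s.erase c, ((u d - u c) * (β - u d))⁻¹ := by
        refine IH s c (Function.update y c (y a)) hscard hc ?_ ?_ ?_
        · intro i hi; exact hβ i (Finset.mem_of_mem_erase hi)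
        · intro i hi
          obtain ⟨hic, his⟩ := Finset.mem_erase.mp hi
          rw [Function.update_of_ne hic]
          exact hy i his
        · rw [Function.update_self, hya]
      rw [h1, hyc]
    rw [Finset.sum_congr rfl hstep]
    -- nonzeroness facts
    have hne : ∀ c ∈ s, u c - u a ≠ 0 := by
      intro c hc
      obtain ⟨hca, -⟩ := Finset.mem_erase.mp hc
      exact sub_ne_zero_of_ne (fun h => hca (hu h))
    have hneβ : ∀ c ∈ s, β - u c ≠ 0 := by
      intro c hc
      exact sub_ne_zero_of_ne (hβ c (Finset.mem_of_mem_erase hc))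
    set N := ∏ c ∈ s, ((u c - u a) * (β - u c)) with hNdef
    have hN : N ≠ 0 := Finset.prod_ne_zero_iff.mpr
      (fun c hc => mul_ne_zero (hne c hc) (hneβ c hc))
    -- Lagrange identity transported to indices
    have hEimg := lagrange_pow (s.image u) (n+1)
      (by rw [Finset.card_image_of_injective s hu, hscard]) β (u a)
    have hE : (β - u a) ^ (n+1) = ∑ c ∈ s, (β - u c) ^ (n+1) *
        ∏ d ∈ s.erase c, ((u d - u a) * (u d - u c)⁻¹) := by
      rw [hEimg, Finset.sum_image (fun x _ y _ h => hu h)]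
      refine Finset.sum_congr rfl fun c hc => ?_
      congr 1
      rw [← Finset.image_erase hu s c, Finset.prod_image (fun x _ y _ h => hu h)]
    apply mul_left_cancel₀ hN
    have hRHS : N * ((β - u a) ^ (n+1) * ∏ c ∈ s, ((u c - u a) * (β - u c))⁻¹)
        = (β - u a) ^ (n+1) := by
      rw [Finset.prod_inv_distrib, ← hNdef, mul_comm ((β - u a) ^ (n+1)), ← mul_assoc,
        mul_inv_cancel₀ hN, one_mul]
    rw [hRHS, Finset.mul_sum, hE]
    refine Finset.sum_congr rfl fun c hc => ?_
    -- pointwise identity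
    have hNsplit : N = ((u c - u a) * (β - u c)) *
        ∏ d ∈ s.erase c, ((u d - u a) * (β - u d)) := by
      rw [hNdef, ← Finset.mul_prod_erase s _ hc]
    have hP1 : (∏ d ∈ s.erase c, (u d - u a)) ≠ 0 :=
      Finset.prod_ne_zero_iff.mpr (fun d hd => hne d (Finset.mem_of_mem_erase hd))
    have hP2 : (∏ d ∈ s.erase c, (β - u d)) ≠ 0 :=
      Finset.prod_ne_zero_iff.mpr (fun d hd => hneβ d (Finset.mem_of_mem_erase hd))
    have hP3 : (∏ d ∈ s.erase c, (u d - u c)) ≠ 0 := by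
      refine Finset.prod_ne_zero_iff.mpr (fun d hd => ?_)
      obtain ⟨hdc, -⟩ := Finset.mem_erase.mp hd
      exact sub_ne_zero_of_ne (fun h => hdc (hu h))
    rw [hNsplit, Finset.prod_mul_distrib,
      show (∏ d ∈ s.erase c, ((u d - u c) * (β - u d))⁻¹)
          = ((∏ d ∈ s.erase c, (u d - u c)) * (∏ d ∈ s.erase c, (β - u d)))⁻¹ by
        rw [← Finset.prod_mul_distrib, Finset.prod_inv_distrib],
      show (∏ d ∈ s.erase c, ((u d - u a) * (u d - u c)⁻¹))
          = (∏ d ∈ s.erase c, (u d - u a)) * (∏ d ∈ s.erase c, (u d - u c))⁻¹ by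
        rw [← Finset.prod_inv_distrib, Finset.prod_mul_distrib]]
    have hA := hneβ c hc
    have hCa := hne c hc
    field_simp
    ring



theorem sum_over_cycles_eq_zero' (hm : 3 ≤ m) (u : Fin m → ℂ)
    (hu : Function.Injective u) : cycSum u u (Finset.univ) = 0 := by
  have h0 : 0 < m := by omega
  set z : Fin m := ⟨0, h0⟩ with hz
  have hcardu : (Finset.univ : Finset (Fin m)).card = m := by simp
  rw [cycSum_rec u u Finset.univ z (Finset.mem_univ z) (by omega)]
  set s0 := (Finset.univ : Finset (Fin m)).erase z with hs0
  have hs0card : s0.card = m - 1 := by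
    rw [hs0, Finset.card_erase_of_mem (Finset.mem_univ z), hcardu]
  set k := m - 3 with hk
  have huz : ∀ c ∈ s0, u c ≠ u z := by
    intro c hc h
    exact (Finset.mem_erase.mp hc).1 (hu h)
  have hterm : ∀ c ∈ s0, (u c - u z)⁻¹ * cycSum u (Function.update u c (u z)) s0
      = (u c - u z)⁻¹ *
        ((u z - u c) ^ k * ∏ d ∈ s0.erase c, ((u d - u c) * (u z - u d))⁻¹) := by
    intro c hc
    congr 1
    refine cycSum_closed u hu (u z) k s0 c (Function.update u c (u z))
      (by omega) hc ?_ ?_ ?_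
    · intro i hi h
      exact huz i hi h.symm
    · intro i hi
      exact Function.update_of_ne (Finset.mem_erase.mp hi).1 _ u
    · exact Function.update_self c (u z) u
  rw [Finset.sum_congr rfl hterm]
  -- Lagrange at the nodes s0, evaluated at u z
  have himgcard : (s0.image u).card = m - 1 := by
    rw [Finset.card_image_of_injective s0 hu, hs0card]
  have hEimg := lagrange_pow (s0.image u) (k+1) (by omega) (u z) (u z)
  have hE2 : (0:ℂ) = ∑ c ∈ s0, (u z - u c) ^ (k+1) *
      ∏ d ∈ s0.erase c, ((u z - u d) * (u c - u d)⁻¹) := by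
    have hL : ((u z - u z) ^ (k+1) : ℂ) = 0 := by
      rw [sub_self, zero_pow (Nat.succ_ne_zero k)]
    rw [← hL, hEimg, Finset.sum_image (fun x _ y _ h => hu h)]
    refine Finset.sum_congr rfl fun c hc => ?_
    congr 1
    rw [← Finset.image_erase hu s0 c, Finset.prod_image (fun x _ y _ h => hu h)]
    refine Finset.prod_congr rfl fun d hd => ?_
    have h1 : u d - u z = -(u z - u d) := by ring
    have h2 : u d - u c = -(u c - u d) := by ring
    rw [h1, h2, inv_neg, neg_mul_neg]
  set M := ∏ d ∈ s0, (u z - u d) with hM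
  have hMne : M ≠ 0 := by
    refine Finset.prod_ne_zero_iff.mpr (fun d hd => sub_ne_zero_of_ne ?_)
    exact fun h => huz d hd h.symm
  set e := m - 2 with he
  have hpoint : ∀ c ∈ s0,
      M * (M * ((u c - u z)⁻¹ *
        ((u z - u c) ^ k * ∏ d ∈ s0.erase c, ((u d - u c) * (u z - u d))⁻¹)))
      = (-1:ℂ)^(e+1) * ((u z - u c) ^ (k+1) *
        ∏ d ∈ s0.erase c, ((u z - u d) * (u c - u d)⁻¹)) := by
    intro c hc
    have hecard : (s0.erase c).card = e := by
      rw [Finset.card_erase_of_mem hc, hs0card, he]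
      omega
    have hA : u z - u c ≠ 0 := sub_ne_zero_of_ne (fun h => huz c hc h.symm)
    have hP2 : (∏ d ∈ s0.erase c, (u z - u d)) ≠ 0 :=
      Finset.prod_ne_zero_iff.mpr (fun d hd => sub_ne_zero_of_ne
        (fun h => huz d (Finset.mem_of_mem_erase hd) h.symm))
    have hP4 : (∏ d ∈ s0.erase c, (u c - u d)) ≠ 0 := by
      refine Finset.prod_ne_zero_iff.mpr (fun d hd => sub_ne_zero_of_ne ?_)
      exact fun h => (Finset.mem_erase.mp hd).1 (hu h.symm)
    have hMsplit : M = (u z - u c) * ∏ d ∈ s0.erase c, (u z - u d) := by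
      rw [hM, ← Finset.mul_prod_erase s0 _ hc]
    have hflipprod : (∏ d ∈ s0.erase c, (u d - u c))
        = (-1:ℂ)^e * ∏ d ∈ s0.erase c, (u c - u d) := by
      rw [← hecard, ← Finset.prod_const (-1:ℂ), ← Finset.prod_mul_distrib]
      exact Finset.prod_congr rfl fun d _ => by ring
    have hsplit1 : (∏ d ∈ s0.erase c, ((u d - u c) * (u z - u d))⁻¹)
        = ((∏ d ∈ s0.erase c, (u d - u c)) * (∏ d ∈ s0.erase c, (u z - u d)))⁻¹ := by
      rw [← Finset.prod_mul_distrib, Finset.prod_inv_distrib]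
    have hsplit2 : (∏ d ∈ s0.erase c, ((u z - u d) * (u c - u d)⁻¹))
        = (∏ d ∈ s0.erase c, (u z - u d)) * (∏ d ∈ s0.erase c, (u c - u d))⁻¹ := by
      rw [← Finset.prod_inv_distrib, Finset.prod_mul_distrib]
    have hflipA : u c - u z = -(u z - u c) := by ring
    rw [hMsplit, hsplit1, hsplit2, hflipprod, hflipA]
    have hm1 : ((-1:ℂ))^e ≠ 0 := pow_ne_zero _ (by norm_num)
    set A := u z - u c with hAdef
    set P2 := ∏ d ∈ s0.erase c, (u z - u d) with hP2def
    set P4 := ∏ d ∈ s0.erase c, (u c - u d) with hP4def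
    rw [mul_inv, mul_inv, inv_neg]
    have hinvm1 : ((-1:ℂ)^e)⁻¹ = (-1:ℂ)^e := by
      rw [← inv_pow, inv_neg, inv_one]
    rw [hinvm1]
    field_simp
    ring
  have hMS0 : M * (M * ∑ c ∈ s0, (u c - u z)⁻¹ *
      ((u z - u c) ^ k * ∏ d ∈ s0.erase c, ((u d - u c) * (u z - u d))⁻¹)) = 0 := by
    rw [Finset.mul_sum, Finset.mul_sum, Finset.sum_congr rfl hpoint,
      ← Finset.mul_sum, ← hE2, mul_zero]
  exact (mul_eq_zero.mp ((mul_eq_zero.mp hMS0).resolve_left hMne)).resolve_left hMne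

end CycleStuff

open scoped Classical in
/-- The sum over all `m`-cycles `γ` of `∏ i, 1/(u (γ i) - u i)` vanishes for `m ≥ 3`
and pairwise distinct complex numbers `u i`. -/
theorem sum_over_cycles_eq_zero (m : ℕ) (hm : 3 ≤ m) (u : Fin m → ℂ)
    (hu : Function.Injective u) :
    ∑ γ ∈ Finset.univ.filter
        (fun γ : Equiv.Perm (Fin m) => γ.IsCycle ∧ γ.support = Finset.univ),
      ∏ i : Fin m, 1 / (u (γ i) - u i) = 0 := by
  have h := sum_over_cycles_eq_zero' hm u hu
  rw [cycSum] at h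
  rw [← h]
  exact Finset.sum_congr rfl fun γ _ => Finset.prod_congr rfl fun i _ => one_div _
end

section
/- If m ≥ 3 is odd and u_1, …, u_m are distinct complex numbers, then the sum over all m-cycles γ of ∏_{i=1}^m 1/(u_{γ(i)} − u_i) equals 0, because each cycle γ and its inverse γ^{-1} give contributions that are negatives of each other. -/
open scoped Classical in
/-- For odd `m ≥ 3` and pairwise distinct complex numbers `u i`, the sum over all
`m`-cycles `γ` of `∏ i, 1/(u (γ i) - u i)` vanishes (pairing `γ` with `γ⁻¹`). -/
theorem sum_over_cycles_eq_zero_of_odd (m : ℕ) (hm : 3 ≤ m) (hodd : Odd m)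
    (u : Fin m → ℂ) (hu : Function.Injective u) :
    ∑ γ ∈ Finset.univ.filter
        (fun γ : Equiv.Perm (Fin m) => γ.IsCycle ∧ γ.support = Finset.univ),
      ∏ i : Fin m, 1 / (u (γ i) - u i) = 0 := by
  refine Finset.sum_involution (fun γ _ => γ⁻¹) ?_ ?_ ?_ ?_
  · intro γ hγ
    have key : ∏ i : Fin m, 1 / (u (γ⁻¹ i) - u i)
        = ∏ i : Fin m, 1 / (u i - u (γ i)) := by
      rw [← Equiv.prod_comp γ (fun i => 1 / (u (γ⁻¹ i) - u i))]
      simp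
    have neg : ∏ i : Fin m, 1 / (u i - u (γ i))
        = (-1 : ℂ) ^ m * ∏ i : Fin m, 1 / (u (γ i) - u i) := by
      have h1 : ∀ i, 1 / (u i - u (γ i)) = -1 * (1 / (u (γ i) - u i)) := fun i => by
        rw [neg_one_mul, ← one_div_neg_eq_neg_one_div, neg_sub]
      simp_rw [h1, Finset.prod_mul_distrib, Finset.prod_const, Finset.card_univ,
        Fintype.card_fin]
    rw [key, neg, hodd.neg_one_pow, neg_one_mul, add_neg_cancel]
  · intro γ hγ _
    simp only [Finset.mem_filter] at hγ
    obtain ⟨-, hc, hs⟩ := hγ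
    intro h
    have h2 : γ ^ 2 = 1 := by
      rw [pow_two]; nth_rewrite 1 [← h]; simp
    have ho : orderOf γ = m := by
      rw [hc.orderOf, hs, Finset.card_univ, Fintype.card_fin]
    have : m ∣ 2 := ho ▸ orderOf_dvd_of_pow_eq_one h2
    have := Nat.le_of_dvd (by norm_num) this
    omega
  · intro γ hγ
    simp only [Finset.mem_filter] at hγ ⊢
    exact ⟨Finset.mem_univ _, hγ.2.1.inv, by rw [Equiv.Perm.support_inv, hγ.2.2]⟩
  · intro γ hγ; simp
end
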